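/- Fix n experts, z ≥ 2 outcomes, and ε > 0. Let f_1, …, f_n ∈ ℝ^z be probability vectors, and define the weights p_{i,j} = (ε + D(f_i, f_j))⁻¹ / Σ_{m=1}^{n} (ε + D(f_i, f_m))⁻¹, where D(f, g) = sqrt( (Σ_{x=1}^{z} (f_x − g_x)²) / z ). Let R be the quadratic scoring rule R(f, e) = 2·f_e − Σ_{x=1}^{z} f_x². Then for all experts i, j, k: p_{i,j} < p_{i,k} if and only if E_{f_i}[R(f_k)] > E_{f_i}[R(f_j)], where E_f[R(g)] = Σ_{e=1}^{z} f_e · R(g, e). That is, the quadratic scoring rule is effective with respect to the set of weights assigned according to the distance-based formula. -/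

import Mathlib

/-!
Since `f` sums to one, its expected quadratic score for a report `g` is `Σ fₑ² − Σ (fₑ − gₑ)²`,
so a higher expected score means a smaller squared distance, i.e. a smaller `D`. The weights are
`(ε + D)⁻¹` up to a common positive normalisation, hence strictly decreasing in `D` as well.
-/

open Finset

/-- A probability vector: nonnegative entries summing to 1. -/
def ProbVec {z : ℕ} (f : Fin z → ℝ) : Prop :=
  (∀ k, 0 ≤ f k) ∧ ∑ k, f k = 1

/-- Root-mean-square deviation between two opinions. -/
noncomputable def D {z : ℕ} (f g : Fin z → ℝ) : ℝ :=
  Real.sqrt ((∑ k, (f k - g k) ^ 2) / z)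

/-- The weight that expert `i` assigns to expert `j`, given opinions `f`:
`p_{i,j} = (ε + D(f_i, f_j))⁻¹ / Σ_m (ε + D(f_i, f_m))⁻¹`. -/
noncomputable def weight {n z : ℕ} (ε : ℝ) (f : Fin n → Fin z → ℝ) (i j : Fin n) : ℝ :=
  (ε + D (f i) (f j))⁻¹ / ∑ m, (ε + D (f i) (f m))⁻¹

/-- The quadratic scoring rule: `R(f, e) = 2 f_e − Σ_k f_k²`. -/
noncomputable def QSR {z : ℕ} (f : Fin z → ℝ) (e : Fin z) : ℝ :=
  2 * f e - ∑ k, f k ^ 2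

/-- The `f`-expected score of reporting `g` under the quadratic scoring rule. -/
noncomputable def expScore {z : ℕ} (f g : Fin z → ℝ) : ℝ :=
  ∑ e, f e * QSR g e

theorem expScore_eq_sum_sq_sub_sum_sq_sub {z : ℕ} {f : Fin z → ℝ} (hf : ∑ e, f e = 1)
    (g : Fin z → ℝ) :
    expScore f g = ∑ e, f e ^ 2 - ∑ e, (f e - g e) ^ 2 := by
  have hscore : expScore f g = 2 * ∑ e, f e * g e - (∑ e, g e ^ 2) * ∑ e, f e := by
    simp only [expScore, QSR, mul_sum, ← sum_sub_distrib]
    exact sum_congr rfl fun e _ => by ring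
  have hsq : ∑ e, (f e - g e) ^ 2 = ∑ e, f e ^ 2 - 2 * ∑ e, f e * g e + ∑ e, g e ^ 2 := by
    simp only [mul_sum, ← sum_sub_distrib, ← sum_add_distrib]
    exact sum_congr rfl fun e _ => by ring
  rw [hscore, hsq, hf]
  ring

theorem expScore_lt_expScore_iff {z : ℕ} {f : Fin z → ℝ} (hf : ∑ e, f e = 1)
    (g h : Fin z → ℝ) :
    expScore f g < expScore f h ↔ ∑ e, (f e - h e) ^ 2 < ∑ e, (f e - g e) ^ 2 := by
  rw [expScore_eq_sum_sq_sub_sum_sq_sub hf, expScore_eq_sum_sq_sub_sum_sq_sub hf,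
    sub_lt_sub_iff_left]

theorem D_nonneg {z : ℕ} (f g : Fin z → ℝ) : 0 ≤ D f g :=
  Real.sqrt_nonneg _

theorem D_lt_D_iff {z : ℕ} (f g h : Fin z → ℝ) :
    D f g < D f h ↔ ∑ e, (f e - g e) ^ 2 < ∑ e, (f e - h e) ^ 2 := by
  rcases Nat.eq_zero_or_pos z with rfl | hz
  · simp [D]
  · rw [D, D, Real.sqrt_lt_sqrt_iff (by positivity),
      div_lt_div_iff_of_pos_right (by exact_mod_cast hz)]

theorem weight_lt_weight_iff {n z : ℕ} {ε : ℝ} (hε : 0 < ε) (f : Fin n → Fin z → ℝ)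
    (i j k : Fin n) :
    weight ε f i j < weight ε f i k ↔ D (f i) (f k) < D (f i) (f j) := by
  have hpos : ∀ m, 0 < ε + D (f i) (f m) := fun m => add_pos_of_pos_of_nonneg hε (D_nonneg _ _)
  have hnorm : 0 < ∑ m, (ε + D (f i) (f m))⁻¹ :=
    sum_pos (fun m _ => inv_pos.2 (hpos m)) ⟨i, mem_univ i⟩
  rw [weight, weight, div_lt_div_iff_of_pos_right hnorm, inv_lt_inv₀ (hpos j) (hpos k),
    add_lt_add_iff_left]

theorem quadratic_effective_wrt_weights_general {n z : ℕ}
    {ε : ℝ} (hε : 0 < ε) (f : Fin n → Fin z → ℝ) (hf : ∀ i, ProbVec (f i)) :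
    ∀ i j k : Fin n,
      weight ε f i j < weight ε f i k ↔ expScore (f i) (f k) > expScore (f i) (f j) := by
  intro i j k
  rw [weight_lt_weight_iff hε, D_lt_D_iff, gt_iff_lt, expScore_lt_expScore_iff (hf i).2]

/-- The quadratic scoring rule is effective with respect to the
distance-based weights. -/
theorem quadratic_effective_wrt_weights {n z : ℕ} (hz : 2 ≤ z)
    {ε : ℝ} (hε : 0 < ε) (f : Fin n → Fin z → ℝ) (hf : ∀ i, ProbVec (f i)) :
    ∀ i j k : Fin n,
      weight ε f i j < weight ε f i k ↔ expScore (f i) (f k) > expScore (f i) (f j) :=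
  quadratic_effective_wrt_weights_general hε f hf
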